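/- Let p be an even positive integer and let φ(t) = t^p(1 + at⁻¹ + t⁻²), ψ(t) = t^{−p}(1 + b₁t⁻¹ + b₂t⁻²) with φ(t)ψ(t) = 1 + γ₄t⁻⁴ (i.e. the coefficients of t⁻¹, t⁻², t⁻³ in φψ all vanish), a ≠ 0, and suppose the map (φ, ψ) : ℂ* → ℂ² is injective. Then 1 + at⁻¹ + t⁻² = 1 ± √2 t⁻¹ + t⁻² and 1 + b₁t⁻¹ + b₂t⁻² = 1 ∓ √2 t⁻¹ + t⁻², i.e. a = ±√2, b₁ = −a, b₂ = 1. -/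
import Mathlib


/-- Lemma 3.20: Let `p` be an even positive integer,
`φ(t) = t^p(1 + a t⁻¹ + t⁻²)`, `ψ(t) = t^{−p}(1 + b₁ t⁻¹ + b₂ t⁻²)` with
`φψ = 1 + γ₄ t⁻⁴`, `a ≠ 0`, and `(φ, ψ)` injective on `ℂ*`.  Then
`a = ±√2`, `b₁ = −a`, `b₂ = 1`, i.e. the quadratics are `1 ± √2 t⁻¹ + t⁻²` and
`1 ∓ √2 t⁻¹ + t⁻²`. -/
theorem lemma_3_20 (p : ℕ) (hp : 0 < p) (hpe : Even p) (a b₁ b₂ γ₄ : ℂ) (ha : a ≠ 0)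
    (hprod : ∀ t : ℂ, t ≠ 0 →
      (t ^ p * (1 + a * t⁻¹ + t⁻¹ ^ 2)) *
        (t ^ (-(p : ℤ)) * (1 + b₁ * t⁻¹ + b₂ * t⁻¹ ^ 2)) = 1 + γ₄ * t⁻¹ ^ 4)
    (hinj : Set.InjOn
      (fun t : ℂ => (t ^ p * (1 + a * t⁻¹ + t⁻¹ ^ 2),
                     t ^ (-(p : ℤ)) * (1 + b₁ * t⁻¹ + b₂ * t⁻¹ ^ 2)))
      {t : ℂ | t ≠ 0}) :
    (a = (Real.sqrt 2 : ℂ) ∨ a = -(Real.sqrt 2 : ℂ)) ∧ b₁ = -a ∧ b₂ = 1 := by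
  have key : ∀ s : ℂ, s ≠ 0 →
      (1 + a * s + s ^ 2) * (1 + b₁ * s + b₂ * s ^ 2) = 1 + γ₄ * s ^ 4 := by
    intro s hs
    have h := hprod s⁻¹ (inv_ne_zero hs)
    rw [inv_inv] at h
    have hne : ((s⁻¹ : ℂ) ^ p) ≠ 0 := pow_ne_zero _ (inv_ne_zero hs)
    rw [zpow_neg, zpow_natCast, mul_mul_mul_comm, mul_inv_cancel₀ hne, one_mul] at h
    exact h
  have E : ∀ s : ℂ, s ≠ 0 →
      (a + b₁) * s + (b₂ + a * b₁ + 1) * s ^ 2 + (a * b₂ + b₁) * s ^ 3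
        + (b₂ - γ₄) * s ^ 4 = 0 := by
    intro s hs
    linear_combination key s hs
  have E1 := E 1 one_ne_zero
  have E2 := E 2 two_ne_zero
  have E3 := E 3 three_ne_zero
  have E4 := E 4 (by norm_num)
  have hc1 : a + b₁ = 0 := by
    linear_combination 4 * E1 - 3 * E2 + (4/3 : ℂ) * E3 - (1/4 : ℂ) * E4
  have hc2 : b₂ + a * b₁ + 1 = 0 := by
    linear_combination (-13/3 : ℂ) * E1 + (19/4 : ℂ) * E2 - (7/3 : ℂ) * E3
      + (11/24 : ℂ) * E4
  have hc3 : a * b₂ + b₁ = 0 := by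
    linear_combination (3/2 : ℂ) * E1 - 2 * E2 + (7/6 : ℂ) * E3 - (1/4 : ℂ) * E4
  have hb1 : b₁ = -a := by linear_combination hc1
  have hb2 : b₂ = 1 := by
    have h : a * (b₂ - 1) = 0 := by linear_combination hc3 - hb1
    rcases mul_eq_zero.mp h with h | h
    · exact absurd h ha
    · linear_combination h
  have ha2 : a ^ 2 = 2 := by
    rw [hb1, hb2] at hc2; linear_combination -hc2
  have h2 : ((Real.sqrt 2 : ℝ) : ℂ) ^ 2 = 2 := by
    norm_cast
    exact Real.sq_sqrt (by norm_num)
  have hfac : (a - (Real.sqrt 2 : ℂ)) * (a + (Real.sqrt 2 : ℂ)) = 0 := by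
    linear_combination ha2 - h2
  refine ⟨?_, hb1, hb2⟩
  rcases mul_eq_zero.mp hfac with h | h
  · exact Or.inl (by linear_combination h)
  · exact Or.inr (by linear_combination h)
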